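/- (Tight composition of N Gaussian mechanisms via moments, as used by moments division.) Let N ≥ 1, σ > 0, and for each i ∈ {1,…,N} let vᵢ, vᵢ' ∈ ℝ^{pᵢ} with ‖vᵢ − vᵢ'‖₂ ≤ 1 (sensitivity-1 Gaussian mechanisms on two neighboring datasets). Let μᵢ be the law of vᵢ + Zᵢ and νᵢ the law of vᵢ' + Zᵢ, where Zᵢ has independent N(0, σ²) coordinates, and let μ = ⊗ᵢ μᵢ, ν = ⊗ᵢ νᵢ be the joint output distributions. Then for every real λ > 0, ε > 0, and δ ∈ (0,1) such that exp( N·λ(λ+1)/(2σ²) − λε ) ≤ δ, the measures μ and ν are (ε, δ)-indistinguishable: for every measurable set S, μ(S) ≤ e^ε·ν(S) + δ. In particular, the overall privacy loss of the composition grows with √N (through the moments) rather than linearly in N as under simple composition. -/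

import Mathlib

/-!
The privacy loss of a Gaussian factor, `ℓ = log (dμᵢⱼ/dνᵢⱼ)`, is affine in the output, so its
moments `∫ exp ((λ + 1) ℓ) dνᵢⱼ` are values of the Gaussian moment generating function, equal to
`exp (λ (λ + 1) (m - m')² / (2σ²))`. Densities and moments multiply over independent coordinates,
so the total loss `L` satisfies `∫ exp ((λ + 1) L) dν ≤ exp (N λ (λ + 1) / (2σ²))` by sensitivity.
Integrating the pointwise bound `exp L ≤ exp ε + exp ((λ + 1) L - λ ε)` over `S` against `ν` gives
`μ S ≤ exp ε · ν S + exp (-λ ε) · ∫ exp ((λ + 1) L) dν ≤ exp ε · ν S + δ`.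
-/

open MeasureTheory ProbabilityTheory Real NNReal ENNReal

theorem ENNReal.ofReal_exp_sum {ι : Type*} (s : Finset ι) (f : ι → ℝ) :
    ENNReal.ofReal (exp (∑ i ∈ s, f i)) = ∏ i ∈ s, ENNReal.ofReal (exp (f i)) := by
  rw [exp_sum, ENNReal.ofReal_prod_of_nonneg fun i _ => (exp_pos _).le]

section Pi

variable {ι : Type*} [Fintype ι] {E : ι → Type*} [∀ i, MeasurableSpace (E i)]

theorem lintegral_pi_prod_eq_prod (μ : ∀ i, Measure (E i)) [∀ i, IsProbabilityMeasure (μ i)]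
    {f : ∀ i, E i → ℝ≥0∞} (hf : ∀ i, Measurable (f i)) :
    ∫⁻ x, ∏ i, f i (x i) ∂Measure.pi μ = ∏ i, ∫⁻ y, f i y ∂μ i := by
  rw [lintegral_prod_eq_prod_lintegral_of_indepFun _ _
    (iIndepFun_pi fun i => (hf i).aemeasurable) fun i => (hf i).comp (measurable_pi_apply i)]
  exact Finset.prod_congr rfl fun i _ => (measurePreserving_eval μ i).lintegral_comp (hf i)

theorem lintegral_pi_exp_mul_sum (ν : ∀ i, Measure (E i)) [∀ i, IsProbabilityMeasure (ν i)]
    {L : ∀ i, E i → ℝ} (hL : ∀ i, Measurable (L i)) (c : ℝ) :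
    ∫⁻ x, ENNReal.ofReal (exp (c * ∑ i, L i (x i))) ∂Measure.pi ν
      = ∏ i, ∫⁻ y, ENNReal.ofReal (exp (c * L i y)) ∂ν i := by
  simp_rw [Finset.mul_sum, ENNReal.ofReal_exp_sum]
  exact lintegral_pi_prod_eq_prod ν (f := fun i y => ENNReal.ofReal (exp (c * L i y)))
    fun i => by fun_prop

theorem pi_eq_withDensity_exp_sum {μ ν : ∀ i, Measure (E i)} [∀ i, IsProbabilityMeasure (μ i)]
    [∀ i, IsProbabilityMeasure (ν i)] {L : ∀ i, E i → ℝ} (hL : ∀ i, Measurable (L i))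
    (hμν : ∀ i, μ i = (ν i).withDensity fun y => ENNReal.ofReal (exp (L i y))) :
    Measure.pi μ
      = (Measure.pi ν).withDensity fun x => ENNReal.ofReal (exp (∑ i, L i (x i))) := by
  refine Measure.pi_eq fun s hs => ?_
  have hind : ∀ x : ∀ i, E i, (Set.univ.pi s).indicator
      (fun x => ∏ i, ENNReal.ofReal (exp (L i (x i)))) x
        = ∏ i, (s i).indicator (fun y => ENNReal.ofReal (exp (L i y))) (x i) := by
    intro x
    classical
    simp [Set.indicator_apply, Finset.prod_ite_zero]
  simp_rw [withDensity_apply _ (.univ_pi hs), ← lintegral_indicator (.univ_pi hs),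
    ENNReal.ofReal_exp_sum, hind, hμν, withDensity_apply _ (hs _), ← lintegral_indicator (hs _)]
  exact lintegral_pi_prod_eq_prod ν fun i => (hL i).exp.ennreal_ofReal.indicator (hs i)

end Pi

noncomputable def gaussianPrivacyLoss (m m' : ℝ) (v : ℝ≥0) (x : ℝ) : ℝ :=
  ((x - m') ^ 2 - (x - m) ^ 2) / (2 * v)

@[fun_prop]
theorem measurable_gaussianPrivacyLoss (m m' : ℝ) (v : ℝ≥0) :
    Measurable (gaussianPrivacyLoss m m' v) := by
  unfold gaussianPrivacyLoss; fun_prop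

theorem gaussianReal_eq_withDensity_exp_gaussianPrivacyLoss (m m' : ℝ) {v : ℝ≥0} (hv : v ≠ 0) :
    gaussianReal m v = (gaussianReal m' v).withDensity
      fun x => ENNReal.ofReal (exp (gaussianPrivacyLoss m m' v x)) := by
  rw [gaussianReal_of_var_ne_zero _ hv, gaussianReal_of_var_ne_zero _ hv,
    ← withDensity_mul _ (measurable_gaussianPDF _ _) (by fun_prop)]
  congr 1 with x
  rw [Pi.mul_apply, gaussianPDF, gaussianPDF, ← ENNReal.ofReal_mul (gaussianPDFReal_nonneg _ _ _),
    gaussianPDFReal, gaussianPDFReal, mul_assoc _ (rexp _), ← exp_add, gaussianPrivacyLoss]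
  congr 3
  field_simp
  ring

theorem lintegral_exp_mul_gaussianPrivacyLoss (m m' : ℝ) {v : ℝ≥0} (hv : v ≠ 0) (lam : ℝ) :
    ∫⁻ x, ENNReal.ofReal (exp ((lam + 1) * gaussianPrivacyLoss m m' v x)) ∂gaussianReal m' v
      = ENNReal.ofReal (exp (lam * (lam + 1) * (m - m') ^ 2 / (2 * v))) := by
  have hv' : (v : ℝ) ≠ 0 := by exact_mod_cast hv
  set a := (lam + 1) * (m - m') / v
  set b := -((lam + 1) * (m ^ 2 - m' ^ 2) / (2 * v))
  have haffine : ∀ x, (lam + 1) * gaussianPrivacyLoss m m' v x = b + a * x := by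
    intro x
    simp only [gaussianPrivacyLoss, a, b]
    field_simp
    ring
  have hmgf : ∫ x, exp (a * x) ∂gaussianReal m' v = exp (m' * a + v * a ^ 2 / 2) :=
    congrFun mgf_id_gaussianReal a
  simp_rw [haffine, exp_add]
  rw [← ofReal_integral_eq_lintegral_ofReal
      ((integrable_exp_mul_gaussianReal a).const_mul _) (ae_of_all _ fun _ => by positivity),
    integral_const_mul, hmgf, ← exp_add]
  congr 2
  simp only [a, b]
  field_simp
  ring

theorem exp_le_exp_add_exp_mul_sub {lam : ℝ} (hlam : 0 ≤ lam) (ε l : ℝ) :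
    exp l ≤ exp ε + exp ((lam + 1) * l - lam * ε) := by
  rcases le_total l ε with hl | hl
  · linarith [exp_le_exp.2 hl, exp_pos ((lam + 1) * l - lam * ε)]
  · have : l ≤ (lam + 1) * l - lam * ε := by nlinarith
    linarith [exp_le_exp.2 this, exp_pos ε]

theorem measure_le_exp_mul_add_of_eq_withDensity {Ω : Type*} [MeasurableSpace Ω]
    {μ ν : Measure Ω} {L : Ω → ℝ} (hL : Measurable L)
    (hμν : μ = ν.withDensity fun x => ENNReal.ofReal (exp (L x)))
    {lam : ℝ} (hlam : 0 ≤ lam) (ε : ℝ) {S : Set Ω} (hS : MeasurableSet S) :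
    μ S ≤ ENNReal.ofReal (exp ε) * ν S
      + ENNReal.ofReal (exp (-(lam * ε))) * ∫⁻ x, ENNReal.ofReal (exp ((lam + 1) * L x)) ∂ν := by
  have hmeas : Measurable fun x => ENNReal.ofReal (exp ((lam + 1) * L x)) := by fun_prop
  rw [hμν, withDensity_apply _ hS]
  calc ∫⁻ x in S, ENNReal.ofReal (exp (L x)) ∂ν
      ≤ ∫⁻ x in S, ENNReal.ofReal (exp ε)
          + ENNReal.ofReal (exp (-(lam * ε))) * ENNReal.ofReal (exp ((lam + 1) * L x)) ∂ν := by
        refine setLIntegral_mono (by fun_prop) fun x _ => ?_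
        rw [← ENNReal.ofReal_mul (exp_pos _).le, ← exp_add, ← ENNReal.ofReal_add (exp_pos _).le
          (exp_pos _).le, neg_add_eq_sub]
        exact ENNReal.ofReal_le_ofReal (exp_le_exp_add_exp_mul_sub hlam ε (L x))
    _ = ENNReal.ofReal (exp ε) * ν S + ENNReal.ofReal (exp (-(lam * ε)))
          * ∫⁻ x in S, ENNReal.ofReal (exp ((lam + 1) * L x)) ∂ν := by
        rw [lintegral_add_left measurable_const, setLIntegral_const, lintegral_const_mul _ hmeas,
          mul_comm]
    _ ≤ _ := by gcongr; exact Measure.restrict_le_self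

theorem sum_sum_sq_sub_le_card {ι : Type*} [Fintype ι] {κ : ι → Type*} [∀ i, Fintype (κ i)]
    {a b : ∀ i, κ i → ℝ} (h : ∀ i, √(∑ j, (a i j - b i j) ^ 2) ≤ 1) :
    ∑ i, ∑ j, (a i j - b i j) ^ 2 ≤ Fintype.card ι := by
  simpa using Finset.sum_le_sum fun i (_ : i ∈ Finset.univ) => Real.sqrt_le_one.1 (h i)

theorem gaussian_composition_moments_dp_general
    (N : ℕ) (σ : ℝ) (hσ : 0 < σ)
    (p : Fin N → ℕ) (v v' : ∀ i, Fin (p i) → ℝ)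
    (hsens : ∀ i, Real.sqrt (∑ j, (v i j - v' i j) ^ 2) ≤ 1)
    (lam ε δ : ℝ) (hlam : 0 < lam)
    (hcond : Real.exp ((N : ℝ) * (lam * (lam + 1)) / (2 * σ ^ 2) - lam * ε) ≤ δ) :
    ∀ S : Set (∀ i, Fin (p i) → ℝ), MeasurableSet S →
      (Measure.pi fun i => Measure.pi fun j => gaussianReal (v i j) ((σ ^ 2).toNNReal)) S
        ≤ ENNReal.ofReal (Real.exp ε) *
            (Measure.pi fun i => Measure.pi fun j =>
              gaussianReal (v' i j) ((σ ^ 2).toNNReal)) S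
          + ENNReal.ofReal δ := by
  intro S hS
  set d := (σ ^ 2).toNNReal
  have hd : (d : ℝ) = σ ^ 2 := Real.coe_toNNReal _ (sq_nonneg σ)
  have hd0 : d ≠ 0 := by rw [← NNReal.coe_ne_zero, hd]; positivity
  have hloss (i : Fin N) (j : Fin (p i)) := measurable_gaussianPrivacyLoss (v i j) (v' i j) d
  set L := fun i (y : Fin (p i) → ℝ) => ∑ j, gaussianPrivacyLoss (v i j) (v' i j) d (y j)
  have hL (i : Fin N) : Measurable (L i) := by fun_prop
  have hμν := pi_eq_withDensity_exp_sum hL fun i => pi_eq_withDensity_exp_sum (hloss i)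
    fun j => gaussianReal_eq_withDensity_exp_gaussianPrivacyLoss _ _ hd0
  have hmoment := lintegral_pi_exp_mul_sum (fun i => Measure.pi fun j => gaussianReal (v' i j) d)
    hL (lam + 1)
  simp only [L, lintegral_pi_exp_mul_sum _ (hloss _),
    lintegral_exp_mul_gaussianPrivacyLoss _ _ hd0, ← ENNReal.ofReal_exp_sum] at hmoment
  have hexponent : ∑ i, ∑ j, lam * (lam + 1) * (v i j - v' i j) ^ 2 / (2 * d)
      ≤ N * (lam * (lam + 1)) / (2 * σ ^ 2) := by
    calc _ = lam * (lam + 1) / (2 * σ ^ 2) * ∑ i, ∑ j, (v i j - v' i j) ^ 2 := by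
          simp only [Finset.mul_sum, hd]
          exact Finset.sum_congr rfl fun i _ => Finset.sum_congr rfl fun j _ => by ring
      _ ≤ lam * (lam + 1) / (2 * σ ^ 2) * N := by
          gcongr; simpa using sum_sum_sq_sub_le_card hsens
      _ = _ := by ring
  refine (measure_le_exp_mul_add_of_eq_withDensity (by fun_prop) hμν hlam.le ε hS).trans ?_
  rw [hmoment, ← ENNReal.ofReal_mul (exp_pos _).le, ← exp_add]
  gcongr
  exact (exp_le_exp.2 (by linarith)).trans hcond

/-- Tight composition of `N` sensitivity-1 Gaussian mechanisms via moments: if for each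
`i` we have `‖vᵢ - vᵢ'‖₂ ≤ 1`, `μ` and `ν` are the joint (product) output laws of the
Gaussian mechanisms centered at `vᵢ` and `vᵢ'` with independent `N(0,σ²)` coordinates,
and `exp(N·λ(λ+1)/(2σ²) - λε) ≤ δ`, then `μ` and `ν` are (ε,δ)-indistinguishable. -/
theorem gaussian_composition_moments_dp
    (N : ℕ) (hN : 1 ≤ N) (σ : ℝ) (hσ : 0 < σ)
    (p : Fin N → ℕ) (v v' : ∀ i, Fin (p i) → ℝ)
    (hsens : ∀ i, Real.sqrt (∑ j, (v i j - v' i j) ^ 2) ≤ 1)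
    (lam ε δ : ℝ) (hlam : 0 < lam) (hε : 0 < ε) (hδ : δ ∈ Set.Ioo (0 : ℝ) 1)
    (hcond : Real.exp ((N : ℝ) * (lam * (lam + 1)) / (2 * σ ^ 2) - lam * ε) ≤ δ) :
    ∀ S : Set (∀ i, Fin (p i) → ℝ), MeasurableSet S →
      (Measure.pi fun i => Measure.pi fun j => gaussianReal (v i j) ((σ ^ 2).toNNReal)) S
        ≤ ENNReal.ofReal (Real.exp ε) *
            (Measure.pi fun i => Measure.pi fun j =>
              gaussianReal (v' i j) ((σ ^ 2).toNNReal)) S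
          + ENNReal.ofReal δ :=
  gaussian_composition_moments_dp_general N σ hσ p v v' hsens lam ε δ hlam hcond
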